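/- Fix q ∈ (0,1) and c ∈ ℝ with 0 ≤ c ≤ min{q, 1−q}. Then (1/2)·((√q − √(q−c))² + (√(1−q−c) − √(1−q))²) ≤ c²/(2·q·(1−q)). Consequently, for the two lower-bound distributions P and Q of the paper's construction (which differ only in point masses: P has mass q at 0 and mass 1−q−c at H while Q has mass q−c at 0 and mass 1−q at H, with identical densities in between, and c = q(1−q)/(3√n)), the squared Hellinger distance satisfies H²(P,Q) ≤ c²/(2·q·(1−q)). -/

import Mathlib

/-!
Both measures have densities with respect to `δ₀ + δ_H + Lebesgue|(0,H)` that agree off `{0, H}`.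
Since the Hellinger integral may be computed against any common dominating measure, the common
continuous part drops out and `H²(P,Q)` is the two-atom expression of the first claim with
`c = q(1-q)/(3√n)`. That expression is bounded termwise via
`√a - √(a - c) = c / (√a + √(a - c)) ≤ c / √a`.
-/

open MeasureTheory Set

noncomputable section

/-- The Newsvendor loss `ℓ(a,Z) = q·max{Z−a,0} + (1−q)·max{a−Z,0}` with critical quantile `q`. -/
def nvLoss (q a z : ℝ) : ℝ := q * max (z - a) 0 + (1 - q) * max (a - z) 0

/-- The expected Newsvendor loss `L(a)` under the demand distribution `μ`. -/
def expLoss (q : ℝ) (μ : Measure ℝ) (a : ℝ) : ℝ := ∫ z, nvLoss q a z ∂μ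

/-- The CDF of the demand distribution `μ`. -/
def cdf' (μ : Measure ℝ) (z : ℝ) : ℝ := (μ (Iic z)).toReal

/-- The optimal decision `a* = inf {a ≥ 0 : F(a) ≥ q}`. -/
def optDec (q : ℝ) (μ : Measure ℝ) : ℝ := sInf {a : ℝ | 0 ≤ a ∧ q ≤ cdf' μ a}

/-- The empirical CDF of the samples `ω : Fin n → ℝ`. -/
def empCdf (n : ℕ) (ω : Fin n → ℝ) (z : ℝ) : ℝ :=
  (∑ i : Fin n, if ω i ≤ z then (1 : ℝ) else 0) / n

/-- The SAA (sample average approximation) decision `â = inf {a ≥ 0 : F̂(a) ≥ q}`. -/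
def saa (q : ℝ) (n : ℕ) (ω : Fin n → ℝ) : ℝ := sInf {a : ℝ | 0 ≤ a ∧ q ≤ empCdf n ω a}

/-- The joint law of `n` iid samples from `μ`. -/
def iid (μ : Measure ℝ) (n : ℕ) : Measure (Fin n → ℝ) := Measure.pi fun _ => μ

/-- A distribution `μ` is `(β,γ,ζ)`-clustered if
`|a − a*| ≤ (1/γ)·|F(a) − q|^{1/(β+1)}` for all `a ∈ [a*−ζ, a*+ζ]`. -/
def Clustered (q β γ ζ : ℝ) (μ : Measure ℝ) : Prop :=
  ∀ a ∈ Icc (optDec q μ - ζ) (optDec q μ + ζ),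
    |a - optDec q μ| ≤ (1 / γ) * |cdf' μ a - q| ^ ((1 : ℝ) / (β + 1))

/-- The squared Hellinger distance
`H²(P,Q) = (1/2)·∫ (√(dP/dμ) − √(dQ/dμ))² dμ`, computed with the common dominating
measure `μ = P + Q`. -/
def sqHellinger (P Q : Measure ℝ) : ℝ :=
  (1/2) * ∫ x, (Real.sqrt ((P.rnDeriv (P + Q) x).toReal)
      - Real.sqrt ((Q.rnDeriv (P + Q) x).toReal))^2 ∂(P + Q)

/-- The lower-bound distribution `P`: mass `q` at `0`, uniform density `C/(H√n)` on
`(0,H)`, and mass `1 − q − C/√n` at `H`. -/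
def lowerBoundP (q C H : ℝ) (n : ℕ) : Measure ℝ :=
  ENNReal.ofReal q • Measure.dirac 0
    + ENNReal.ofReal (1 - q - C / Real.sqrt n) • Measure.dirac H
    + (volume.restrict (Ioo 0 H)).withDensity fun _ => ENNReal.ofReal (C/(H*Real.sqrt n))

/-- The lower-bound distribution `Q`: mass `q − C/√n` at `0`, uniform density `C/(H√n)` on
`(0,H)`, and mass `1 − q` at `H`. -/
def lowerBoundQ (q C H : ℝ) (n : ℕ) : Measure ℝ :=
  ENNReal.ofReal (q - C / Real.sqrt n) • Measure.dirac 0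
    + ENNReal.ofReal (1 - q) • Measure.dirac H
    + (volume.restrict (Ioo 0 H)).withDensity fun _ => ENNReal.ofReal (C/(H*Real.sqrt n))

open scoped ENNReal

lemma mul_sq_sqrt_sub_sqrt_sub_le {a c : ℝ} (hc : 0 ≤ c) (hca : c ≤ a) :
    a * (√a - √(a - c)) ^ 2 ≤ c ^ 2 := by
  have hdiff : 0 ≤ √a - √(a - c) := sub_nonneg.2 (Real.sqrt_le_sqrt (by linarith))
  have hprod : (√a - √(a - c)) * √a ≤ c :=
    calc (√a - √(a - c)) * √a
        ≤ (√a - √(a - c)) * (√a + √(a - c)) :=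
          mul_le_mul_of_nonneg_left (le_add_of_nonneg_right (Real.sqrt_nonneg _)) hdiff
      _ = c := by
          rw [show (√a - √(a - c)) * (√a + √(a - c)) = √a ^ 2 - √(a - c) ^ 2 by ring,
            Real.sq_sqrt (by linarith), Real.sq_sqrt (by linarith)]
          ring
  calc a * (√a - √(a - c)) ^ 2 = ((√a - √(a - c)) * √a) ^ 2 := by
        rw [mul_pow, Real.sq_sqrt (by linarith)]; ring
    _ ≤ c ^ 2 := pow_le_pow_left₀ (mul_nonneg hdiff (Real.sqrt_nonneg _)) hprod 2

lemma half_sq_sqrt_sub_add_le {q c : ℝ} (hq : q ∈ Ioo (0 : ℝ) 1) (hc : 0 ≤ c)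
    (hcq : c ≤ min q (1 - q)) :
    (1 / 2) * ((√q - √(q - c)) ^ 2 + (√(1 - q - c) - √(1 - q)) ^ 2)
      ≤ c ^ 2 / (2 * q * (1 - q)) := by
  obtain ⟨hq0, hq1⟩ := hq
  have h1q : 0 < 1 - q := by linarith
  have hleft : (√q - √(q - c)) ^ 2 ≤ c ^ 2 / q := by
    rw [le_div_iff₀ hq0, mul_comm]
    exact mul_sq_sqrt_sub_sqrt_sub_le hc (hcq.trans (min_le_left _ _))
  have hright : (√(1 - q - c) - √(1 - q)) ^ 2 ≤ c ^ 2 / (1 - q) := by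
    rw [le_div_iff₀ h1q, mul_comm, sub_sq_comm]
    exact mul_sq_sqrt_sub_sqrt_sub_le hc (hcq.trans (min_le_right _ _))
  have hsplit : c ^ 2 / (2 * q * (1 - q)) = (1 / 2) * (c ^ 2 / q + c ^ 2 / (1 - q)) := by
    field_simp; ring
  rw [hsplit]
  gcongr

lemma add_mul_sq_sqrt_div_sub_sqrt_div {a b : ℝ} (ha : 0 ≤ a) (hb : 0 ≤ b) :
    (a + b) * (√(a / (a + b)) - √(b / (a + b))) ^ 2 = (√a - √b) ^ 2 := by
  rcases (add_nonneg ha hb).eq_or_lt with hab | hab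
  · obtain ⟨rfl, rfl⟩ : a = 0 ∧ b = 0 := ⟨by linarith, by linarith⟩
    simp
  · rw [Real.sqrt_div ha, Real.sqrt_div hb, div_sub_div_same, div_pow,
      Real.sq_sqrt hab.le, mul_div_cancel₀ _ hab.ne']

lemma withDensity_eq_withDensity_add_div {α : Type*} [MeasurableSpace α] (μ : Measure α)
    {f g : α → ℝ≥0∞} (hf : Measurable f) (hg : Measurable g) (hfg : ∀ x, f x + g x ≠ ∞) :
    μ.withDensity f = (μ.withDensity (f + g)).withDensity (f / (f + g)) := by
  rw [← withDensity_mul μ (hf.add hg) (hf.div (hf.add hg))]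
  congr 1
  funext x
  exact (ENNReal.mul_div_cancel' (fun h => (add_eq_zero.1 h).1)
    (fun h => absurd h (hfg x))).symm

theorem sqHellinger_withDensity {μ : Measure ℝ} [SigmaFinite μ] {f g : ℝ → ℝ≥0∞}
    (hf : Measurable f) (hg : Measurable g) (hfg : ∀ x, f x + g x ≠ ∞) :
    sqHellinger (μ.withDensity f) (μ.withDensity g)
      = (1 / 2) * ∫ x, (√(f x).toReal - √(g x).toReal) ^ 2 ∂μ := by
  have hsum : μ.withDensity f + μ.withDensity g = μ.withDensity (f + g) :=
    (withDensity_add_left hf g).symm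
  set ν := μ.withDensity (f + g)
  have : SigmaFinite ν := SigmaFinite.withDensity_of_ne_top (ae_of_all _ hfg)
  have hdf : (μ.withDensity f).rnDeriv ν =ᵐ[ν] f / (f + g) := by
    rw [withDensity_eq_withDensity_add_div μ hf hg hfg]
    exact Measure.rnDeriv_withDensity ν (hf.div (hf.add hg))
  have hdg : (μ.withDensity g).rnDeriv ν =ᵐ[ν] g / (f + g) := by
    rw [withDensity_eq_withDensity_add_div μ hg hf (fun x => add_comm (g x) (f x) ▸ hfg x),
      add_comm g f]
    exact Measure.rnDeriv_withDensity _ (hg.div (hf.add hg))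
  rw [sqHellinger, hsum]
  have hdens : (fun x => (√((μ.withDensity f).rnDeriv ν x).toReal
      - √((μ.withDensity g).rnDeriv ν x).toReal) ^ 2) =ᵐ[ν]
      fun x => (√(f x / (f x + g x)).toReal - √(g x / (f x + g x)).toReal) ^ 2 := by
    filter_upwards [hdf, hdg] with x hxf hxg
    rw [hxf, hxg, Pi.div_apply, Pi.div_apply, Pi.add_apply]
  rw [integral_congr_ae hdens,
    integral_withDensity_eq_integral_toReal_smul (hf.add hg) (ae_of_all _ fun x => (hfg x).lt_top)]
  congr 2
  funext x
  have hf' : f x ≠ ∞ := fun h => hfg x (by simp [h])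
  have hg' : g x ≠ ∞ := fun h => hfg x (by simp [h])
  rw [Pi.add_apply, ENNReal.toReal_div, ENNReal.toReal_div, ENNReal.toReal_add hf' hg', smul_eq_mul,
    add_mul_sq_sqrt_div_sub_sqrt_div ENNReal.toReal_nonneg ENNReal.toReal_nonneg]

theorem integral_eq_add_of_eq_zero_off {a b : ℝ} {ρ : Measure ℝ} [NullSingletonClass ρ]
    {φ : ℝ → ℝ} (hφ : ∀ x, x ≠ a → x ≠ b → φ x = 0) :
    ∫ x, φ x ∂(Measure.dirac a + Measure.dirac b + ρ) = φ a + φ b := by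
  have hρ : φ =ᵐ[ρ] fun _ => 0 := by
    filter_upwards [ρ.ae_ne a, ρ.ae_ne b] with x hxa hxb using hφ x hxa hxb
  have hdirac (c : ℝ) : Integrable φ (Measure.dirac c) := integrable_dirac enorm_lt_top
  rw [integral_add_measure ((hdirac a).add_measure (hdirac b))
      ((integrable_zero _ _ _).congr hρ.symm),
    integral_add_measure (hdirac a) (hdirac b), integral_dirac, integral_dirac,
    integral_congr_ae hρ, integral_zero, add_zero]

def twoPointUpdate (a b : ℝ) (u v w : ℝ≥0∞) : ℝ → ℝ≥0∞ :=
  fun x => if x = a then u else if x = b then v else w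

lemma measurable_twoPointUpdate (a b : ℝ) (u v w : ℝ≥0∞) :
    Measurable (twoPointUpdate a b u v w) :=
  Measurable.ite (measurableSet_singleton a) measurable_const
    (Measurable.ite (measurableSet_singleton b) measurable_const measurable_const)

lemma withDensity_twoPointUpdate {a b : ℝ} (hab : a ≠ b) (ρ : Measure ℝ) [NullSingletonClass ρ]
    (u v w : ℝ≥0∞) :
    (Measure.dirac a + Measure.dirac b + ρ).withDensity (twoPointUpdate a b u v w)
      = u • Measure.dirac a + v • Measure.dirac b + ρ.withDensity fun _ => w := by
  have hρ : twoPointUpdate a b u v w =ᵐ[ρ] fun _ => w := by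
    filter_upwards [ρ.ae_ne a, ρ.ae_ne b] with x hxa hxb
    simp [twoPointUpdate, hxa, hxb]
  rw [withDensity_add_measure, withDensity_add_measure, dirac_withDensity, dirac_withDensity,
    withDensity_congr_ae hρ]
  simp [twoPointUpdate, hab.symm]

theorem sqHellinger_dirac_add_dirac_add_withDensity {a b : ℝ} (hab : a ≠ b) (ρ : Measure ℝ)
    [NullSingletonClass ρ] [SigmaFinite ρ] {u v u' v' w : ℝ≥0∞} (hu : u ≠ ∞) (hv : v ≠ ∞)
    (hu' : u' ≠ ∞) (hv' : v' ≠ ∞) (hw : w ≠ ∞) :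
    sqHellinger (u • Measure.dirac a + v • Measure.dirac b + ρ.withDensity fun _ => w)
        (u' • Measure.dirac a + v' • Measure.dirac b + ρ.withDensity fun _ => w)
      = (1 / 2) * ((√u.toReal - √u'.toReal) ^ 2 + (√v.toReal - √v'.toReal) ^ 2) := by
  rw [← withDensity_twoPointUpdate hab, ← withDensity_twoPointUpdate hab,
    sqHellinger_withDensity (measurable_twoPointUpdate ..) (measurable_twoPointUpdate ..)
      (fun x => by unfold twoPointUpdate; split_ifs <;> simp [*]),
    integral_eq_add_of_eq_zero_off (fun x hxa hxb => by simp [twoPointUpdate, hxa, hxb])]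
  simp [twoPointUpdate, hab.symm]

lemma div_sqrt_natCast_le {C : ℝ} (hC : 0 ≤ C) (n : ℕ) : C / √n ≤ C := by
  rcases n.eq_zero_or_pos with rfl | hn
  · simpa using hC
  · exact div_le_self hC (Real.one_le_sqrt.2 (by exact_mod_cast hn))

theorem hellinger_distance_bound_general
    (q : ℝ) (hq : q ∈ Ioo (0:ℝ) 1) (n : ℕ) (H : ℝ) (hH : 0 < H) :
    (∀ c : ℝ, 0 ≤ c → c ≤ min q (1 - q) →
      (1/2) * ((Real.sqrt q - Real.sqrt (q - c))^2
          + (Real.sqrt (1 - q - c) - Real.sqrt (1 - q))^2)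
        ≤ c^2 / (2*q*(1-q))) ∧
    sqHellinger (lowerBoundP q (q*(1-q)/3) H n) (lowerBoundQ q (q*(1-q)/3) H n)
      ≤ (q*(1-q)/(3*Real.sqrt n))^2 / (2*q*(1-q)) := by
  refine ⟨fun c => half_sq_sqrt_sub_add_le hq, ?_⟩
  obtain ⟨hq0, hq1⟩ := hq
  have hC : 0 ≤ q * (1 - q) / 3 := by nlinarith
  rw [lowerBoundP, lowerBoundQ, sqHellinger_dirac_add_dirac_add_withDensity hH.ne _
      ENNReal.ofReal_ne_top ENNReal.ofReal_ne_top ENNReal.ofReal_ne_top ENNReal.ofReal_ne_top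
      ENNReal.ofReal_ne_top, ← div_div (q * (1 - q))]
  set c := q * (1 - q) / 3 / √n
  have hcq : c ≤ min q (1 - q) :=
    (div_sqrt_natCast_le hC n).trans (le_min (by nlinarith) (by nlinarith))
  have hc_le_q : c ≤ q := hcq.trans (min_le_left _ _)
  have hc_le_one_sub_q : c ≤ 1 - q := hcq.trans (min_le_right _ _)
  rw [ENNReal.toReal_ofReal hq0.le, ENNReal.toReal_ofReal (by linarith),
    ENNReal.toReal_ofReal (by linarith), ENNReal.toReal_ofReal (by linarith)]
  exact half_sq_sqrt_sub_add_le ⟨hq0, hq1⟩ (div_nonneg hC (Real.sqrt_nonneg _)) hcq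

/-- For `q ∈ (0,1)` and `0 ≤ c ≤ min{q,1−q}`,
`(1/2)·((√q − √(q−c))² + (√(1−q−c) − √(1−q))²) ≤ c²/(2q(1−q))`; consequently, for the
paper's lower-bound distributions `P` and `Q` (which differ only in their point masses at
`0` and `H`, with `c = q(1−q)/(3√n)`), the squared Hellinger distance satisfies
`H²(P,Q) ≤ c²/(2q(1−q))`. -/
theorem hellinger_distance_bound
    (q : ℝ) (hq : q ∈ Ioo (0:ℝ) 1) (n : ℕ) (hn : 1 ≤ n) (H : ℝ) (hH : 0 < H) :
    (∀ c : ℝ, 0 ≤ c → c ≤ min q (1 - q) →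
      (1/2) * ((Real.sqrt q - Real.sqrt (q - c))^2
          + (Real.sqrt (1 - q - c) - Real.sqrt (1 - q))^2)
        ≤ c^2 / (2*q*(1-q))) ∧
    sqHellinger (lowerBoundP q (q*(1-q)/3) H n) (lowerBoundQ q (q*(1-q)/3) H n)
      ≤ (q*(1-q)/(3*Real.sqrt n))^2 / (2*q*(1-q)) :=
  hellinger_distance_bound_general q hq n H hH
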